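/- For every real ν ≥ 1 and every real x > 0, the Student t cumulative distribution function with ν degrees of freedom is strictly below the standard normal cumulative distribution function at x: F_ν(x) < Φ(x). Equivalently, the Student t distribution assigns strictly larger probability than the standard normal to the tail (x, ∞) for every x > 0. -/

import Mathlib

open Real Set

/-- Standard normal cumulative distribution function. -/
noncomputable def stdNormalCDF (x : ℝ) : ℝ :=
  ∫ t in Set.Iic x, (2 * π) ^ (-(1:ℝ)/2) * Real.exp (-t^2 / 2)

/-- Student t cumulative distribution function with `ν` degrees of freedom. -/
noncomputable def studentCDF (ν : ℝ) (x : ℝ) : ℝ :=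
  ∫ t in Set.Iic x,
    (Real.Gamma ((ν + 1) / 2) / (Real.sqrt (ν * π) * Real.Gamma (ν / 2))) *
      (1 + t ^ 2 / ν) ^ (-((ν + 1) / 2))

/-- Standard normal quantile `z_q`: the (unique) real with `stdNormalCDF z = q`. -/
noncomputable def zQuantile (q : ℝ) : ℝ := Function.invFun stdNormalCDF q

/-- Student t quantile `t_{ν;q}`: the (unique) real with `studentCDF ν t = q`. -/
noncomputable def tQuantile (ν q : ℝ) : ℝ := Function.invFun (studentCDF ν) q

/-!
Write `f` for the Student density and `φ` for the standard normal density. Both are even with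
total mass one. Up to the constant `log (φ 0 / f 0)`, which is nonnegative by Gautschi's
inequality `Γ (s + 1/2) ≤ √s Γ s`, the log-ratio `log (φ t / f t)` equals
`L t = (ν + 1) / 2 * log (1 + t² / ν) - t² / 2`, which increases on `[0, 1]` and decreases on
`[1, ∞)`. Hence either `f < φ` on all of `(0, x)`, and the two CDFs differ by an integral over
`(0, x)` since both equal `1/2` at `0`, or `φ < f` on all of `(x, ∞)`, and they differ by the tail
integrals. The normalising constant of `f` comes from writing `Γ p * (1 + t² / ν) ^ (-p)` as an
Euler integral and exchanging the order of integration.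
-/

open MeasureTheory ProbabilityTheory

theorem Real.Gamma_add_half_le_sqrt_mul_Gamma {s : ℝ} (hs : 0 < s) :
    Gamma (s + 1 / 2) ≤ √s * Gamma s := by
  have hΓ := Gamma_pos_of_pos hs
  have h := Gamma_mul_add_mul_le_rpow_Gamma_mul_rpow_Gamma hs (add_pos hs one_pos)
    (one_half_pos (α := ℝ)) one_half_pos (add_halves 1)
  rwa [show 1 / 2 * s + 1 / 2 * (s + 1) = s + 1 / 2 by ring, Gamma_add_one hs.ne',
    mul_rpow hs.le hΓ.le, mul_comm (s ^ _), ← mul_assoc, ← rpow_add hΓ, add_halves, rpow_one,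
    ← sqrt_eq_rpow, mul_comm] at h

theorem integrable_one_add_sq_div_rpow_neg {ν p : ℝ} (hν : 0 < ν) (hp : 1 / 2 < p) :
    Integrable fun t : ℝ ↦ (1 + t ^ 2 / ν) ^ (-p) := by
  have h := (integrable_rpow_neg_one_add_norm_sq (E := ℝ) (μ := volume) (r := 2 * p)
    (by rw [Module.finrank_self, Nat.cast_one]; linarith)).comp_div (sqrt_pos.2 hν).ne'
  convert h using 2 with t
  rw [norm_div, Real.norm_eq_abs, Real.norm_eq_abs, abs_of_pos (sqrt_pos.2 hν), div_pow, sq_abs,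
    sq_sqrt hν.le]
  ring_nf

theorem integral_one_add_sq_div_rpow_neg {ν p : ℝ} (hν : 0 < ν) (hp : 1 / 2 < p) :
    ∫ t : ℝ, (1 + t ^ 2 / ν) ^ (-p) = √(ν * π) * Gamma (p - 1 / 2) / Gamma p := by
  have hp0 : 0 < p := by linarith
  set F : ℝ → ℝ → ℝ := fun t s ↦ s ^ (p - 1) * exp (-((1 + t ^ 2 / ν) * s)) with hF
  have hF_s : ∀ t, ∫ s in Ioi 0, F t s = Gamma p * (1 + t ^ 2 / ν) ^ (-p) := fun t ↦ by
    rw [integral_rpow_mul_exp_neg_mul_Ioi hp0 (by positivity), one_div,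
      inv_rpow (by positivity), ← rpow_neg (by positivity), mul_comm]
  have hF_gauss : ∀ s, (F · s) = fun t ↦ s ^ (p - 1) * exp (-s) * exp (-(s / ν) * t ^ 2) :=
    fun s ↦ funext fun t ↦ by
      simp only [hF, mul_assoc, ← exp_add]
      ring_nf
  have hF_t : ∀ s ∈ Ioi (0 : ℝ), ∫ t, F t s = √(ν * π) * (exp (-s) * s ^ (p - 1 / 2 - 1)) := by
    intro s hs
    rw [hF_gauss, integral_const_mul, integral_gaussian, div_div_eq_mul_div, sqrt_div' _ hs.le,
      mul_comm π, show p - 1 / 2 - 1 = p - 1 - 1 / 2 by ring, rpow_sub hs (p - 1), ← sqrt_eq_rpow]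
    ring
  have hF_int : Integrable (Function.uncurry F) (volume.prod (volume.restrict (Ioi 0))) := by
    rw [integrable_prod_iff' (by fun_prop)]
    constructor
    · filter_upwards [ae_restrict_mem measurableSet_Ioi] with s hs
      simp only [Function.uncurry_apply_pair, hF_gauss]
      exact (integrable_exp_neg_mul_sq (div_pos hs hν)).const_mul _
    · have hΓ := (GammaIntegral_convergent (by linarith : 0 < p - 1 / 2)).const_mul √(ν * π)
      refine IntegrableOn.congr_fun hΓ (fun s hs ↦ ?_) measurableSet_Ioi
      simp only [Function.uncurry_apply_pair, ← hF_t s hs]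
      exact integral_congr_ae (ae_of_all _ fun t ↦
        (norm_of_nonneg (mul_nonneg (rpow_nonneg hs.out.le _) (exp_pos _).le)).symm)
  have hswap := integral_integral_swap hF_int
  rw [integral_congr_ae (ae_of_all _ hF_s), setIntegral_congr_fun measurableSet_Ioi hF_t,
    integral_const_mul, integral_const_mul, ← Gamma_eq_integral (by linarith)] at hswap
  rw [eq_div_iff (Gamma_pos_of_pos hp0).ne', mul_comm, hswap]

theorem setIntegral_lt_setIntegral_of_forall_lt {X : Type*} [MeasurableSpace X] {μ : Measure X}
    {s : Set X} {f g : X → ℝ} (hs : MeasurableSet s) (hμs : μ s ≠ 0) (hf : IntegrableOn f s μ)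
    (hg : IntegrableOn g s μ) (hlt : ∀ x ∈ s, f x < g x) :
    ∫ x in s, f x ∂μ < ∫ x in s, g x ∂μ := by
  have hpos : ∀ x ∈ s, 0 < g x - f x := fun x hx ↦ sub_pos.2 (hlt x hx)
  have hsupp : Function.support (fun x ↦ g x - f x) ∩ s = s :=
    inter_eq_right.2 fun x hx ↦ (hpos x hx).ne'
  rw [← sub_pos, ← integral_sub hg hf, setIntegral_pos_iff_support_of_nonneg_ae
    (ae_restrict_of_forall_mem hs fun x hx ↦ (hpos x hx).le) (hg.sub hf), hsupp]
  exact pos_iff_ne_zero.2 hμs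

theorem setIntegral_Iic_zero_of_even {f : ℝ → ℝ} (hf : Integrable f) (heven : ∀ t, f (-t) = f t) :
    ∫ t in Iic 0, f t = (∫ t, f t) / 2 := by
  have hsymm : ∫ t in Iic 0, f t = ∫ t in Ioi 0, f t := by
    simpa only [neg_zero, heven] using integral_comp_neg_Iic (0 : ℝ) f
  have := intervalIntegral.integral_Iic_add_Ioi (b := 0) hf.integrableOn hf.integrableOn
  linarith

theorem setIntegral_Iic_lt_of_forall_Ioo_lt {f g : ℝ → ℝ} {a x : ℝ}
    (hf : IntegrableOn f (Iic x)) (hg : IntegrableOn g (Iic x))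
    (ha : ∫ t in Iic a, f t = ∫ t in Iic a, g t) (hax : a < x)
    (hlt : ∀ t ∈ Ioo a x, f t < g t) :
    ∫ t in Iic x, f t < ∫ t in Iic x, g t := by
  have hsplit : ∀ h : ℝ → ℝ, IntegrableOn h (Iic x) →
      ∫ t in Iic x, h t = (∫ t in Iic a, h t) + ∫ t in Ioo a x, h t := fun h hh ↦ by
    rw [← integral_Ioc_eq_integral_Ioo, ← intervalIntegral.integral_of_le hax.le,
      ← intervalIntegral.integral_Iic_sub_Iic (hh.mono_set (Iic_subset_Iic.2 hax.le)) hh]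
    ring
  have hIoo : Ioo a x ⊆ Iic x := Ioo_subset_Ioc_self.trans Ioc_subset_Iic_self
  rw [hsplit f hf, hsplit g hg, ha, add_lt_add_iff_left]
  exact setIntegral_lt_setIntegral_of_forall_lt measurableSet_Ioo (by simp [hax])
    (hf.mono_set hIoo) (hg.mono_set hIoo) hlt

theorem setIntegral_Iic_lt_of_forall_Ioi_lt {f g : ℝ → ℝ} {x : ℝ} (hf : Integrable f)
    (hg : Integrable g) (hmass : ∫ t, f t = ∫ t, g t) (hlt : ∀ t ∈ Ioi x, g t < f t) :
    ∫ t in Iic x, f t < ∫ t in Iic x, g t := by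
  have htail := setIntegral_lt_setIntegral_of_forall_lt measurableSet_Ioi (by simp)
    hg.integrableOn hf.integrableOn hlt
  rw [← intervalIntegral.integral_Iic_add_Ioi hf.integrableOn hf.integrableOn,
    ← intervalIntegral.integral_Iic_add_Ioi hg.integrableOn hg.integrableOn] at hmass
  linarith

theorem forall_Ioo_lt_or_forall_Ioi_lt_of_strictMonoOn_of_strictAntiOn {α β : Type*}
    [LinearOrder α] [LinearOrder β] {g : α → β} {a b x : α} {K : β}
    (hmono : StrictMonoOn g (Icc a b)) (hanti : StrictAntiOn g (Ici b)) (hK : K ≤ g a)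
    (hax : a < x) : (∀ t ∈ Ioo a x, K < g t) ∨ ∀ t ∈ Ioi x, g t < K := by
  by_cases hx : K < g x
  · refine .inl fun t ⟨hat, htx⟩ ↦ ?_
    rcases le_or_gt t b with htb | hbt
    · exact hK.trans_lt (hmono ⟨le_rfl, hat.le.trans htb⟩ ⟨hat.le, htb⟩ hat)
    · exact hx.trans (hanti hbt.le (hbt.trans htx).le htx)
  · have hbx : b < x := by
      by_contra! hxb
      exact hx (hK.trans_lt (hmono ⟨le_rfl, hax.le.trans hxb⟩ ⟨hax.le, hxb⟩ hax))
    exact .inr fun t hxt ↦ (hanti hbx.le (hbx.trans hxt).le hxt).trans_le (not_lt.1 hx)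

noncomputable def studentPDF (ν t : ℝ) : ℝ :=
  Gamma ((ν + 1) / 2) / (√(ν * π) * Gamma (ν / 2)) * (1 + t ^ 2 / ν) ^ (-((ν + 1) / 2))

theorem studentCDF_eq_integral_studentPDF (ν x : ℝ) :
    studentCDF ν x = ∫ t in Iic x, studentPDF ν t := rfl

theorem stdNormalCDF_eq_integral_gaussianPDFReal (x : ℝ) :
    stdNormalCDF x = ∫ t in Iic x, gaussianPDFReal 0 1 t := by
  refine setIntegral_congr_fun measurableSet_Iic fun t _ ↦ ?_
  simp only [gaussianPDFReal, NNReal.coe_one, mul_one, sub_zero]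
  rw [sqrt_eq_rpow, ← rpow_neg (by positivity), neg_div]

section Student

variable {ν : ℝ}

theorem studentPDF_pos (hν : 0 < ν) (t : ℝ) : 0 < studentPDF ν t := by
  have := Gamma_pos_of_pos (by positivity : 0 < (ν + 1) / 2)
  have := Gamma_pos_of_pos (by positivity : 0 < ν / 2)
  unfold studentPDF
  positivity

theorem studentPDF_neg (ν t : ℝ) : studentPDF ν (-t) = studentPDF ν t := by
  simp only [studentPDF, neg_sq]

theorem integrable_studentPDF (hν : 0 < ν) : Integrable (studentPDF ν) :=
  (integrable_one_add_sq_div_rpow_neg (p := (ν + 1) / 2) hν (by linarith)).const_mul _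

theorem integral_studentPDF (hν : 0 < ν) : ∫ t, studentPDF ν t = 1 := by
  have := Gamma_pos_of_pos (by positivity : 0 < (ν + 1) / 2)
  have := Gamma_pos_of_pos (by positivity : 0 < ν / 2)
  unfold studentPDF
  rw [integral_const_mul, integral_one_add_sq_div_rpow_neg hν (by linarith),
    show (ν + 1) / 2 - 1 / 2 = ν / 2 by ring]
  field_simp

theorem studentPDF_zero_le_gaussianPDFReal_zero (hν : 0 < ν) :
    studentPDF ν 0 ≤ gaussianPDFReal 0 1 0 := by
  have hΓ := Gamma_add_half_le_sqrt_mul_Gamma (by positivity : 0 < ν / 2)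
  rw [show ν / 2 + 1 / 2 = (ν + 1) / 2 by ring] at hΓ
  have := Gamma_pos_of_pos (by positivity : 0 < ν / 2)
  have hsqrt : √(ν * π) = √(ν / 2) * √(2 * π) := by
    rw [← sqrt_mul (by positivity)]; ring_nf
  have h2π : 0 < √(2 * π) := by positivity
  simp only [studentPDF, gaussianPDFReal, NNReal.coe_one, mul_one, sub_zero, ne_eq,
    OfNat.ofNat_ne_zero, not_false_eq_true, zero_pow, zero_div, add_zero, one_rpow, neg_zero,
    exp_zero]
  rw [hsqrt, div_le_iff₀ (by positivity)]
  calc Gamma ((ν + 1) / 2) ≤ √(ν / 2) * Gamma (ν / 2) := hΓ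
    _ = (√(2 * π))⁻¹ * (√(ν / 2) * √(2 * π) * Gamma (ν / 2)) := by field_simp

end Student

/-- `log (φ t / f t) - log (φ 0 / f 0)` for the standard normal density `φ` and the Student
density `f`. -/
noncomputable def studentLogRatio (ν t : ℝ) : ℝ :=
  (ν + 1) / 2 * log (1 + t ^ 2 / ν) - t ^ 2 / 2

section LogRatio

variable {ν : ℝ}

@[simp]
theorem studentLogRatio_zero (ν : ℝ) : studentLogRatio ν 0 = 0 := by
  simp [studentLogRatio]

theorem hasDerivAt_studentLogRatio (hν : 0 < ν) (t : ℝ) :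
    HasDerivAt (studentLogRatio ν) (t * (1 - t ^ 2) / (ν + t ^ 2)) t := by
  have hinner : HasDerivAt (fun u : ℝ ↦ 1 + u ^ 2 / ν) (2 * t / ν) t := by
    simpa using ((hasDerivAt_pow 2 t).div_const ν).const_add 1
  have hsq : HasDerivAt (fun u : ℝ ↦ u ^ 2 / 2) t t := by
    simpa using (hasDerivAt_pow 2 t).div_const 2
  refine (((hinner.log (by positivity)).const_mul ((ν + 1) / 2)).sub hsq).congr_deriv ?_
  field_simp
  ring

theorem strictMonoOn_studentLogRatio (hν : 0 < ν) : StrictMonoOn (studentLogRatio ν) (Icc 0 1) :=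
  strictMonoOn_of_deriv_pos (convex_Icc 0 1)
    (fun t _ ↦ (hasDerivAt_studentLogRatio hν t).continuousAt.continuousWithinAt)
    fun t ht ↦ by
      rw [interior_Icc] at ht
      rw [(hasDerivAt_studentLogRatio hν t).deriv]
      have : 0 < 1 - t ^ 2 := by nlinarith [ht.1, ht.2]
      exact div_pos (mul_pos ht.1 this) (by positivity)

theorem strictAntiOn_studentLogRatio (hν : 0 < ν) : StrictAntiOn (studentLogRatio ν) (Ici 1) :=
  strictAntiOn_of_deriv_neg (convex_Ici 1)
    (fun t _ ↦ (hasDerivAt_studentLogRatio hν t).continuousAt.continuousWithinAt)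
    fun t ht ↦ by
      rw [interior_Ici, mem_Ioi] at ht
      rw [(hasDerivAt_studentLogRatio hν t).deriv]
      have : 1 - t ^ 2 < 0 := by nlinarith
      exact div_neg_of_neg_of_pos (mul_neg_of_pos_of_neg (by linarith) this) (by positivity)

theorem log_studentPDF_sub_log_gaussianPDFReal (hν : 0 < ν) (t : ℝ) :
    log (studentPDF ν t) - log (gaussianPDFReal 0 1 t) =
      log (studentPDF ν 0) - log (gaussianPDFReal 0 1 0) - studentLogRatio ν t := by
  have := Gamma_pos_of_pos (by positivity : 0 < (ν + 1) / 2)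
  have := Gamma_pos_of_pos (by positivity : 0 < ν / 2)
  simp only [studentPDF, gaussianPDFReal, studentLogRatio, NNReal.coe_one, mul_one, sub_zero]
  rw [log_mul (by positivity) (by positivity), log_mul (by positivity) (by positivity),
    log_mul (by positivity) (by positivity), log_mul (by positivity) (by positivity),
    log_rpow (by positivity), log_rpow (by positivity), log_exp, log_exp]
  simp only [ne_eq, OfNat.ofNat_ne_zero, not_false_eq_true, zero_pow, zero_div, add_zero, log_one,
    mul_zero, neg_zero]
  ring

theorem studentPDF_lt_gaussianPDFReal_iff (hν : 0 < ν) (t : ℝ) :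
    studentPDF ν t < gaussianPDFReal 0 1 t ↔
      log (studentPDF ν 0) - log (gaussianPDFReal 0 1 0) < studentLogRatio ν t := by
  rw [← log_lt_log_iff (studentPDF_pos hν t) (gaussianPDFReal_pos 0 1 t one_ne_zero)]
  have := log_studentPDF_sub_log_gaussianPDFReal hν t
  constructor <;> intro <;> linarith

theorem gaussianPDFReal_lt_studentPDF_iff (hν : 0 < ν) (t : ℝ) :
    gaussianPDFReal 0 1 t < studentPDF ν t ↔
      studentLogRatio ν t < log (studentPDF ν 0) - log (gaussianPDFReal 0 1 0) := by
  rw [← log_lt_log_iff (gaussianPDFReal_pos 0 1 t one_ne_zero) (studentPDF_pos hν t)]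
  have := log_studentPDF_sub_log_gaussianPDFReal hν t
  constructor <;> intro <;> linarith

end LogRatio

/-- For every `ν ≥ 1` and `x > 0`, the Student t CDF with `ν` degrees of freedom is
strictly below the standard normal CDF at `x`. -/
theorem studentCDF_lt_stdNormalCDF (ν x : ℝ) (hν : 1 ≤ ν) (hx : 0 < x) :
    studentCDF ν x < stdNormalCDF x := by
  have hν0 : 0 < ν := by linarith
  have hf := integrable_studentPDF hν0
  have hφ := integrable_gaussianPDFReal 0 1
  have hpeak : log (studentPDF ν 0) - log (gaussianPDFReal 0 1 0) ≤ studentLogRatio ν 0 := by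
    rw [studentLogRatio_zero, sub_nonpos]
    exact log_le_log (studentPDF_pos hν0 0) (studentPDF_zero_le_gaussianPDFReal_zero hν0)
  have hmass : ∫ t, studentPDF ν t = ∫ t, gaussianPDFReal 0 1 t := by
    rw [integral_studentPDF hν0, integral_gaussianPDFReal_eq_one 0 one_ne_zero]
  rw [studentCDF_eq_integral_studentPDF, stdNormalCDF_eq_integral_gaussianPDFReal]
  rcases forall_Ioo_lt_or_forall_Ioi_lt_of_strictMonoOn_of_strictAntiOn
    (strictMonoOn_studentLogRatio hν0) (strictAntiOn_studentLogRatio hν0) hpeak hx with h | h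
  · have hhalf : ∫ t in Iic 0, studentPDF ν t = ∫ t in Iic 0, gaussianPDFReal 0 1 t := by
      rw [setIntegral_Iic_zero_of_even hf (studentPDF_neg ν),
        setIntegral_Iic_zero_of_even hφ fun t ↦ by simp [gaussianPDFReal], hmass]
    exact setIntegral_Iic_lt_of_forall_Ioo_lt hf.integrableOn hφ.integrableOn hhalf hx
      fun t ht ↦ (studentPDF_lt_gaussianPDFReal_iff hν0 t).2 (h t ht)
  · exact setIntegral_Iic_lt_of_forall_Ioi_lt hf hφ hmass
      fun t ht ↦ (gaussianPDFReal_lt_studentPDF_iff hν0 t).2 (h t ht)
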